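/- Let f : ℝ³ → ℂ be measurable and ℤ³-periodic with finite L² norm on [0,1)³, let K : ℝ³ × ℝ³ → ℂ be measurable and ℤ³-periodic in its second argument, and suppose M : ℝ³ → [0,∞) satisfies |K(ζ,v)| ≤ M(ζ) for all ζ, v and ∫_{ℝ³} (1 + |ζ|)·M(ζ) dζ < ∞. Then for all η ∈ (0,1] and all t ≥ 0, |∫_{ℝ³} ∫_{[0,1)³} K(ζ,v) · (exp(−i t (e(v + ηζ/2) − e(v − ηζ/2))) − 1) · conj(f(v − ηζ/2)) · f(v + ηζ/2) dv dζ| ≤ 2π√3 · η · t · (∫_{ℝ³} |ζ|·M(ζ) dζ) · ‖f‖²_{L²([0,1)³)}. -/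

import Mathlib

/-!
Since `|exp(-iθ) - 1| ≤ |θ|` and `e` is `2π`-Lipschitz in each coordinate, Cauchy–Schwarz in `ℝ³`
bounds the factor `exp(-it(e(v + ηζ/2) - e(v - ηζ/2))) - 1` by `2π √3 η t |ζ|`. By AM-GM,
`|f(v - ηζ/2)| |f(v + ηζ/2)|` is at most the mean of the two squares, and each translate of the
periodic function `|f|²` has the same integral over the period cell as `|f|²`. Integrating the
resulting bound `2π √3 η t |ζ| M(ζ) ‖f‖²` over `ζ` gives the claim.
-/

open MeasureTheory Real

/-- The lattice dispersion relation `e(k) = 3 - cos(2πk₁) - cos(2πk₂) - cos(2πk₃)`. -/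
noncomputable def disp (k : Fin 3 → ℝ) : ℝ := 3 - ∑ i, Real.cos (2 * Real.pi * k i)

/-- The fundamental domain `[0,1)³` of the torus. -/
def box3 : Set (Fin 3 → ℝ) := Set.univ.pi fun _ => Set.Ico (0 : ℝ) 1

/-- The Euclidean norm on `ℝ³` (realized as `Fin 3 → ℝ`). -/
noncomputable def eunorm3 (x : Fin 3 → ℝ) : ℝ := Real.sqrt (∑ i, x i ^ 2)

section FundamentalDomain

variable {E : Type*} [AddCommGroup E] [MeasurableSpace E] [MeasurableAdd E]
  {μ : Measure E} [μ.IsAddLeftInvariant] {L : AddSubgroup E} {s : Set E}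

theorem MeasureTheory.IsAddFundamentalDomain.image_add_right
    (hs : IsAddFundamentalDomain L s μ) (a : E) :
    IsAddFundamentalDomain L ((· + a) '' s) μ := by
  have : (· + a) = (a +ᵥ ·) := funext fun x => add_comm x a
  rw [this, Set.image_vadd]
  exact hs.vadd_of_comm a

variable [Countable L] {F : Type*} [NormedAddCommGroup F] {g : E → F}

theorem MeasureTheory.IsAddFundamentalDomain.integrableOn_comp_add_right_iff
    (hs : IsAddFundamentalDomain L s μ) (hg : ∀ (ℓ : L) x, g (ℓ +ᵥ x) = g x) (a : E) :
    IntegrableOn (fun x => g (x + a)) s μ ↔ IntegrableOn g s μ := by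
  rw [← (hs.image_add_right a).integrableOn_iff hs hg]
  exact ((measurePreserving_add_right μ a).integrableOn_image
    (measurableEmbedding_addRight a)).symm

theorem MeasureTheory.IsAddFundamentalDomain.setIntegral_comp_add_right [NormedSpace ℝ F]
    (hs : IsAddFundamentalDomain L s μ) (hg : ∀ (ℓ : L) x, g (ℓ +ᵥ x) = g x) (a : E) :
    ∫ x in s, g (x + a) ∂μ = ∫ x in s, g x ∂μ := by
  rw [← (measurePreserving_add_right μ a).setIntegral_image_emb (measurableEmbedding_addRight a)]
  exact (hs.image_add_right a).setIntegral_eq hs hg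

theorem MeasureTheory.IsAddFundamentalDomain.norm_setIntegral_mul_conj_mul_le
    (hs : IsAddFundamentalDomain L s μ) {f : E → ℂ} (hf : ∀ (ℓ : L) x, f (ℓ +ᵥ x) = f x)
    (hf2 : IntegrableOn (fun x => ‖f x‖ ^ 2) s μ) {φ : E → ℂ} {B : ℝ} (hφ : ∀ x, ‖φ x‖ ≤ B)
    (c : E) :
    ‖∫ x in s, φ x * (starRingEnd ℂ) (f (x - c)) * f (x + c) ∂μ‖
      ≤ B * ∫ x in s, ‖f x‖ ^ 2 ∂μ := by
  have hg : ∀ (ℓ : L) x, ‖f (ℓ +ᵥ x)‖ ^ 2 = ‖f x‖ ^ 2 := fun ℓ x => by rw [hf]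
  have hint : ∀ a, IntegrableOn (fun x => ‖f (x + a)‖ ^ 2) s μ := fun a =>
    (hs.integrableOn_comp_add_right_iff hg a).mpr hf2
  have hB : 0 ≤ B := (norm_nonneg _).trans (hφ c)
  have hpoint : ∀ x, ‖φ x * (starRingEnd ℂ) (f (x - c)) * f (x + c)‖
      ≤ B * ((‖f (x + -c)‖ ^ 2 + ‖f (x + c)‖ ^ 2) / 2) := fun x => by
    rw [norm_mul, norm_mul, Complex.norm_conj, mul_assoc, ← sub_eq_add_neg]
    gcongr
    · exact hφ x
    · linarith [two_mul_le_add_sq ‖f (x - c)‖ ‖f (x + c)‖]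
  calc ‖∫ x in s, φ x * (starRingEnd ℂ) (f (x - c)) * f (x + c) ∂μ‖
      ≤ ∫ x in s, B * ((‖f (x + -c)‖ ^ 2 + ‖f (x + c)‖ ^ 2) / 2) ∂μ :=
        norm_integral_le_of_norm_le ((((hint (-c)).add (hint c)).div_const 2).const_mul B)
          (ae_of_all _ hpoint)
    _ = B * ∫ x in s, ‖f x‖ ^ 2 ∂μ := by
        rw [integral_const_mul, integral_div, integral_add (hint (-c)) (hint c),
          hs.setIntegral_comp_add_right (g := fun x => ‖f x‖ ^ 2) hg,
          hs.setIntegral_comp_add_right (g := fun x => ‖f x‖ ^ 2) hg]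
        ring

end FundamentalDomain

theorem apply_vadd_span_basisFun_eq_of_periodic {ι α : Type*} [Fintype ι] {g : (ι → ℝ) → α}
    (hg : ∀ (v : ι → ℝ) (m : ι → ℤ), g (v + fun i => (m i : ℝ)) = g v)
    (ℓ : (Submodule.span ℤ (Set.range (Pi.basisFun ℝ ι))).toAddSubgroup) (v : ι → ℝ) :
    g (ℓ +ᵥ v) = g v := by
  classical
  obtain ⟨m, hm⟩ := (Submodule.mem_span_range_iff_exists_fun ℤ).mp ℓ.2
  have : (ℓ : ι → ℝ) = fun i => (m i : ℝ) := by
    rw [← hm]; ext i; simp [Finset.sum_apply, Pi.basisFun_apply, Pi.single_apply]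
  rw [AddSubgroup.vadd_def, vadd_eq_add, this, add_comm]
  exact hg v m

instance {ι : Type*} [Finite ι] :
    Countable (Submodule.span ℤ (Set.range (Pi.basisFun ℝ ι))).toAddSubgroup :=
  inferInstanceAs (Countable (Submodule.span ℤ (Set.range (Pi.basisFun ℝ ι))))

theorem isAddFundamentalDomain_box3 :
    IsAddFundamentalDomain (Submodule.span ℤ (Set.range (Pi.basisFun ℝ (Fin 3)))).toAddSubgroup
      box3 volume := by
  rw [box3, ← ZSpan.fundamentalDomain_pi_basisFun]
  exact ZSpan.isAddFundamentalDomain' _ _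

theorem sum_abs_le_sqrt_card_mul_norm {ι : Type*} [Fintype ι] (x : EuclideanSpace ℝ ι) :
    ∑ i, |x i| ≤ √(Fintype.card ι) * ‖x‖ := by
  rw [EuclideanSpace.norm_eq, ← Real.sqrt_mul (Nat.cast_nonneg _)]
  refine Real.le_sqrt_of_sq_le ?_
  simpa [sq_abs] using sq_sum_le_card_mul_sum_sq (s := Finset.univ) (f := fun i => |x i|)

theorem eunorm3_eq_norm (x : Fin 3 → ℝ) : eunorm3 x = ‖WithLp.toLp 2 x‖ := by
  simp [eunorm3, EuclideanSpace.norm_eq]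

theorem continuous_eunorm3 : Continuous eunorm3 := by
  simpa only [funext eunorm3_eq_norm] using (PiLp.continuous_toLp 2 _).norm

theorem eunorm3_smul {c : ℝ} (hc : 0 ≤ c) (x : Fin 3 → ℝ) : eunorm3 (c • x) = c * eunorm3 x := by
  rw [eunorm3_eq_norm, eunorm3_eq_norm, WithLp.toLp_smul, norm_smul, Real.norm_of_nonneg hc]

theorem sum_abs_le_sqrt_three_mul_eunorm3 (x : Fin 3 → ℝ) : ∑ i, |x i| ≤ √3 * eunorm3 x := by
  simpa [eunorm3_eq_norm] using sum_abs_le_sqrt_card_mul_norm (WithLp.toLp 2 x)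

theorem integrable_mul_of_integrable_one_add_mul {α : Type*} [MeasurableSpace α] {μ : Measure α}
    {ρ M : α → ℝ} (hρ : AEStronglyMeasurable ρ μ) (hρ0 : ∀ x, 0 ≤ ρ x)
    (h : Integrable (fun x => (1 + ρ x) * M x) μ) : Integrable (fun x => ρ x * M x) μ := by
  have hpos : ∀ x, 0 < 1 + ρ x := fun x => by linarith [hρ0 x]
  have hquot : AEStronglyMeasurable (fun x => ρ x / (1 + ρ x)) μ :=
    (hρ.aemeasurable.div (hρ.aemeasurable.const_add 1)).aestronglyMeasurable
  refine (h.bdd_mul (c := 1) hquot (ae_of_all _ fun x => ?_)).congr (ae_of_all _ fun x => ?_)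
  · rw [Real.norm_of_nonneg (div_nonneg (hρ0 x) (hpos x).le), div_le_one (hpos x)]
    linarith
  · field_simp [(hpos x).ne']

theorem abs_cos_sub_cos_two_pi_mul_le (a b : ℝ) :
    |cos (2 * π * (a - b)) - cos (2 * π * (a + b))| ≤ 4 * π * |b| := by
  refine (Real.abs_cos_sub_cos_le _ _).trans_eq ?_
  rw [show 2 * π * (a - b) - 2 * π * (a + b) = -(4 * π) * b by ring, abs_mul, abs_neg,
    abs_of_pos (by positivity)]

theorem abs_disp_add_sub_disp_sub_le (v c : Fin 3 → ℝ) :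
    |disp (v + c) - disp (v - c)| ≤ 4 * π * √3 * eunorm3 c := by
  have hdiff : disp (v + c) - disp (v - c)
      = ∑ i, (cos (2 * π * (v i - c i)) - cos (2 * π * (v i + c i))) := by
    simp only [disp, Pi.add_apply, Pi.sub_apply, Finset.sum_sub_distrib]
    ring
  calc |disp (v + c) - disp (v - c)|
      ≤ ∑ i, |cos (2 * π * (v i - c i)) - cos (2 * π * (v i + c i))| := by
        rw [hdiff]; exact Finset.abs_sum_le_sum_abs _ _
    _ ≤ ∑ i, 4 * π * |c i| := Finset.sum_le_sum fun i _ => abs_cos_sub_cos_two_pi_mul_le _ _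
    _ ≤ 4 * π * (√3 * eunorm3 c) := by
        rw [← Finset.mul_sum]
        gcongr
        exact sum_abs_le_sqrt_three_mul_eunorm3 c
    _ = 4 * π * √3 * eunorm3 c := by ring

theorem norm_exp_neg_I_mul_sub_one_le (t θ : ℝ) :
    ‖Complex.exp (-Complex.I * t * θ) - 1‖ ≤ |t * θ| := by
  have h := Real.norm_exp_I_mul_ofReal_sub_one_le (x := -(t * θ))
  rwa [Real.norm_eq_abs, abs_neg, Complex.ofReal_neg, Complex.ofReal_mul, mul_neg, ← neg_mul,
    ← mul_assoc] at h

theorem norm_exp_disp_phase_sub_one_le {t : ℝ} (ht : 0 ≤ t) (v c : Fin 3 → ℝ) :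
    ‖Complex.exp (-Complex.I * (t : ℂ) * ((disp (v + c) - disp (v - c) : ℝ) : ℂ)) - 1‖
      ≤ t * (4 * π * √3 * eunorm3 c) := by
  refine (norm_exp_neg_I_mul_sub_one_le t _).trans ?_
  rw [abs_mul, abs_of_nonneg ht]
  exact mul_le_mul_of_nonneg_left (abs_disp_add_sub_disp_sub_le v c) ht

theorem free_evolution_wigner_continuity_general
    (f : (Fin 3 → ℝ) → ℂ) (K : (Fin 3 → ℝ) → (Fin 3 → ℝ) → ℂ) (M : (Fin 3 → ℝ) → ℝ)
    (hfper : ∀ (v : Fin 3 → ℝ) (m : Fin 3 → ℤ), f (v + fun i => (m i : ℝ)) = f v)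
    (hf2 : IntegrableOn (fun v => ‖f v‖ ^ 2) box3 volume)
    (hMint : Integrable (fun ζ => (1 + eunorm3 ζ) * M ζ) volume)
    (hKM : ∀ ζ v, ‖K ζ v‖ ≤ M ζ) :
    ∀ η : ℝ, η ∈ Set.Ioc (0 : ℝ) 1 → ∀ t : ℝ, 0 ≤ t →
      ‖∫ ζ : Fin 3 → ℝ, ∫ v in box3,
          K ζ v *
            (Complex.exp (-Complex.I * (t : ℂ) *
                ((disp (v + (η / 2) • ζ) - disp (v - (η / 2) • ζ) : ℝ) : ℂ)) - 1) *
            (starRingEnd ℂ) (f (v - (η / 2) • ζ)) * f (v + (η / 2) • ζ)‖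
        ≤ 2 * Real.pi * Real.sqrt 3 * η * t * (∫ ζ : Fin 3 → ℝ, eunorm3 ζ * M ζ) *
            (∫ v in box3, ‖f v‖ ^ 2) := by
  intro η hη t ht
  set C := 2 * π * √3 * η * t * ∫ v in box3, ‖f v‖ ^ 2
  have hinner : ∀ ζ, ‖∫ v in box3,
      K ζ v * (Complex.exp (-Complex.I * (t : ℂ) *
          ((disp (v + (η / 2) • ζ) - disp (v - (η / 2) • ζ) : ℝ) : ℂ)) - 1) *
        (starRingEnd ℂ) (f (v - (η / 2) • ζ)) * f (v + (η / 2) • ζ)‖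
      ≤ C * (eunorm3 ζ * M ζ) := fun ζ => by
    refine (isAddFundamentalDomain_box3.norm_setIntegral_mul_conj_mul_le
      (apply_vadd_span_basisFun_eq_of_periodic hfper) hf2
      (B := M ζ * (t * (4 * π * √3 * eunorm3 ((η / 2) • ζ)))) (fun v => ?_) _).trans_eq ?_
    · rw [norm_mul]
      exact mul_le_mul (hKM ζ v) (norm_exp_disp_phase_sub_one_le ht v _) (norm_nonneg _)
        ((norm_nonneg _).trans (hKM ζ v))
    · rw [eunorm3_smul (by linarith [hη.1])]
      ring
  have hnormM : Integrable (fun ζ => eunorm3 ζ * M ζ) volume :=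
    integrable_mul_of_integrable_one_add_mul continuous_eunorm3.aestronglyMeasurable
      (fun ζ => Real.sqrt_nonneg _) hMint
  calc _ ≤ ∫ ζ, C * (eunorm3 ζ * M ζ) :=
        norm_integral_le_of_norm_le (hnormM.const_mul C) (ae_of_all _ hinner)
    _ = _ := by rw [integral_const_mul]; ring

theorem free_evolution_wigner_continuity
    (f : (Fin 3 → ℝ) → ℂ) (K : (Fin 3 → ℝ) → (Fin 3 → ℝ) → ℂ) (M : (Fin 3 → ℝ) → ℝ)
    (hfmeas : Measurable f)
    (hfper : ∀ (v : Fin 3 → ℝ) (m : Fin 3 → ℤ), f (v + fun i => (m i : ℝ)) = f v)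
    (hf2 : IntegrableOn (fun v => ‖f v‖ ^ 2) box3 volume)
    (hKmeas : Measurable (Function.uncurry K))
    (hKper : ∀ (ζ v : Fin 3 → ℝ) (m : Fin 3 → ℤ), K ζ (v + fun i => (m i : ℝ)) = K ζ v)
    (hM0 : ∀ ζ, 0 ≤ M ζ) (hMmeas : Measurable M)
    (hMint : Integrable (fun ζ => (1 + eunorm3 ζ) * M ζ) volume)
    (hKM : ∀ ζ v, ‖K ζ v‖ ≤ M ζ) :
    ∀ η : ℝ, η ∈ Set.Ioc (0 : ℝ) 1 → ∀ t : ℝ, 0 ≤ t →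
      ‖∫ ζ : Fin 3 → ℝ, ∫ v in box3,
          K ζ v *
            (Complex.exp (-Complex.I * (t : ℂ) *
                ((disp (v + (η / 2) • ζ) - disp (v - (η / 2) • ζ) : ℝ) : ℂ)) - 1) *
            (starRingEnd ℂ) (f (v - (η / 2) • ζ)) * f (v + (η / 2) • ζ)‖
        ≤ 2 * Real.pi * Real.sqrt 3 * η * t * (∫ ζ : Fin 3 → ℝ, eunorm3 ζ * M ζ) *
            (∫ v in box3, ‖f v‖ ^ 2) :=
  free_evolution_wigner_continuity_general f K M hfper hf2 hMint hKM
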